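/- Let I be a negative definite symmetric real m×m matrix whose off-diagonal entries are all nonnegative. Then for every vector n with all entries strictly positive, the vector N defined by N·I = -n (i.e., N = -n·I⁻¹) has all entries strictly positive. -/

import Mathlib

/-!
Put `M = -I`, a positive definite matrix with nonpositive off-diagonal entries, and
`x = -(n ᵥ* I⁻¹)`, so that `x ᵥ* M = n`. Splitting `x = x⁺ - x⁻`, the cross term `x⁺ᵀ M x⁻`
is `≤ 0` because `x⁺` and `x⁻` have disjoint supports, hence
`x⁻ᵀ M x⁻ = x⁺ᵀ M x⁻ - n ⬝ x⁻ ≤ 0` and positive definiteness forces `x⁻ = 0`.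
Once `x ≥ 0`, a vanishing coordinate `x i = 0` would give `n i = ∑ⱼ x j M j i ≤ 0`.
-/

open Matrix

section ZMatrix

variable {ι : Type*} [Fintype ι] {M : Matrix ι ι ℝ}

theorem dotProduct_mulVec_nonpos_of_offDiag_nonpos (hoff : ∀ i j, i ≠ j → M i j ≤ 0)
    {u v : ι → ℝ} (hu : 0 ≤ u) (hv : 0 ≤ v) (huv : ∀ i, u i = 0 ∨ v i = 0) :
    u ⬝ᵥ M *ᵥ v ≤ 0 := by
  simp only [dotProduct, mulVec, Finset.mul_sum]
  refine Finset.sum_nonpos fun i _ ↦ Finset.sum_nonpos fun j _ ↦ ?_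
  obtain rfl | hij := eq_or_ne i j
  · rcases huv i with h | h <;> simp [h]
  · exact mul_nonpos_of_nonneg_of_nonpos (hu i)
      (mul_nonpos_of_nonpos_of_nonneg (hoff i j hij) (hv j))

theorem nonneg_of_vecMul_eq_of_offDiag_nonpos
    (hM : ∀ v : ι → ℝ, v ≠ 0 → 0 < v ⬝ᵥ M *ᵥ v) (hoff : ∀ i j, i ≠ j → M i j ≤ 0)
    {x n : ι → ℝ} (hx : x ᵥ* M = n) (hn : 0 ≤ n) : 0 ≤ x := by
  have hsplit : x⁺ ⬝ᵥ M *ᵥ x⁻ - x⁻ ⬝ᵥ M *ᵥ x⁻ = n ⬝ᵥ x⁻ := by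
    rw [← sub_dotProduct, posPart_sub_negPart, dotProduct_mulVec, hx]
  have hcross : x⁺ ⬝ᵥ M *ᵥ x⁻ ≤ 0 :=
    dotProduct_mulVec_nonpos_of_offDiag_nonpos hoff (posPart_nonneg x) (negPart_nonneg x)
      fun i ↦ (le_total 0 (x i)).symm.imp posPart_eq_zero.2 negPart_eq_zero.2
  have hneg : x⁻ = 0 := by
    by_contra h
    linarith [hM _ h, dotProduct_nonneg_of_nonneg hn (negPart_nonneg x)]
  exact negPart_eq_zero.1 hneg

theorem pos_of_vecMul_eq_of_offDiag_nonpos (hoff : ∀ i j, i ≠ j → M i j ≤ 0)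
    {x n : ι → ℝ} (hx : x ᵥ* M = n) (hx₀ : 0 ≤ x) (hn : ∀ i, 0 < n i) (i : ι) : 0 < x i := by
  refine (hx₀ i).lt_of_ne' fun (hxi : x i = 0) ↦ (hn i).not_ge ?_
  rw [← hx]
  refine Finset.sum_nonpos fun j _ ↦ ?_
  obtain rfl | hji := eq_or_ne j i
  · simp [hxi]
  · exact mul_nonpos_of_nonneg_of_nonpos (hx₀ j) (hoff j i hji)

theorem pos_of_vecMul_eq_of_posDef_of_offDiag_nonpos (hM : M.PosDef)
    (hoff : ∀ i j, i ≠ j → M i j ≤ 0) {x n : ι → ℝ} (hx : x ᵥ* M = n) (hn : ∀ i, 0 < n i) :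
    ∀ i, 0 < x i :=
  pos_of_vecMul_eq_of_offDiag_nonpos hoff hx
    (nonneg_of_vecMul_eq_of_offDiag_nonpos (fun _ hv ↦ by simpa using hM.dotProduct_mulVec_pos hv)
      hoff hx fun i ↦ (hn i).le) hn

end ZMatrix

theorem posSolution_of_negDef_offDiag_nonneg_general {m : ℕ}
    (I : Matrix (Fin m) (Fin m) ℝ) (hneg : (-I).PosDef)
    (hoff : ∀ i j, i ≠ j → 0 ≤ I i j)
    (n : Fin m → ℝ) (hn : ∀ i, 0 < n i) :
    ∀ i, 0 < (-(n ᵥ* I⁻¹)) i := by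
  have hI : IsUnit I.det := (isUnit_iff_isUnit_det I).1 (by simpa using hneg.isUnit)
  refine pos_of_vecMul_eq_of_posDef_of_offDiag_nonpos hneg (fun i j hij ↦ ?_) ?_ hn
  · simpa using hoff i j hij
  · rw [vecMul_neg, neg_vecMul, neg_neg, vecMul_vecMul, nonsing_inv_mul I hI, vecMul_one]

/-- If `I` is a negative definite symmetric real matrix with nonnegative
off-diagonal entries, then for any vector `n` with strictly positive entries,
the vector `N = -n ᵥ* I⁻¹` (so that `N ᵥ* I = -n`) has strictly positive
entries. -/
theorem posSolution_of_negDef_offDiag_nonneg {m : ℕ}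
    (I : Matrix (Fin m) (Fin m) ℝ) (hsymm : I.IsSymm) (hneg : (-I).PosDef)
    (hoff : ∀ i j, i ≠ j → 0 ≤ I i j)
    (n : Fin m → ℝ) (hn : ∀ i, 0 < n i) :
    ∀ i, 0 < (-(n ᵥ* I⁻¹)) i :=
  posSolution_of_negDef_offDiag_nonneg_general I hneg hoff n hn
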